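/- Let 𝒜 be an axiom system from which the five formulas ⟨T ∈ D⟩ and ([𝒜 ⊢ ⟨T ≤ d⟩] → ⟨T ≠ d⟩) for d ∈ {Tu, We, Th, Fr} are all provable. Then no day is 𝒜-p-surprising, i.e., D_surpr^𝒜 = ∅. -/
import Mathlib


open scoped Classical

/-- Propositional formulas over the six variables `Y_r`, `r ∈ R = Fin 6`
(`0 = Mo, 1 = Tu, 2 = We, 3 = Th, 4 = Fr, 5 = none`). -/
inductive Form : Type where
  | bot : Form
  | var : Fin 6 → Form
  | imp : Form → Form → Form
deriving DecidableEq

def Form.neg (φ : Form) : Form := φ.imp .bot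
def Form.top : Form := Form.neg .bot
def Form.or (φ ψ : Form) : Form := φ.neg.imp ψ
def Form.and (φ ψ : Form) : Form := (φ.imp ψ.neg).neg

/-- Evaluation in the model `r ∈ R`: variable `Y_i` is true iff `i = r`. -/
def Form.eval (r : Fin 6) : Form → Bool
  | .bot => false
  | .var i => decide (i = r)
  | .imp φ ψ => !(Form.eval r φ) || Form.eval r ψ

/-- `r ⊨ φ`. -/
def Sat (r : Fin 6) (φ : Form) : Prop := Form.eval r φ = true

def bigOr (l : List Form) : Form := l.foldr Form.or .bot
def bigAnd (l : List Form) : Form := l.foldr Form.and Form.top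

/-- `χ_B = ⋁_{r ∈ B} Y_r`. -/
def chi (B : Finset (Fin 6)) : Form := bigOr ((B.sort (· ≤ ·)).map Form.var)

/-- The axiom `(Ax_{=1})`: exactly one of the variables `Y_r` is true. -/
def Ax1 : Form :=
  (chi Finset.univ).and
    (bigAnd ((List.finRange 6).flatMap (fun i =>
      (List.finRange 6).map (fun j =>
        if i = j then Form.top else ((Form.var i).neg).or ((Form.var j).neg)))))

/-- Provability from the axiom system `A` (by soundness and completeness of
propositional logic, semantic consequence over the six models). -/
def Proves (A : Set Form) (φ : Form) : Prop :=
  ∀ r : Fin 6, (∀ ψ ∈ A, Sat r ψ) → Sat r φ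

/-- `K` is an `A`-p-knowledge set: `A ⊢ ⟨T ∈ K⟩`. -/
def KSet (A : Set Form) (K : Finset (Fin 6)) : Prop := Proves A (chi K)

/-- `K_A`, the intersection of all `A`-p-knowledge sets. -/
noncomputable def KA (A : Set Form) : Finset (Fin 6) :=
  Finset.univ.filter (fun r => ∀ K : Finset (Fin 6), KSet A K → r ∈ K)

/-- The days `D = {Mo,…,Fr}`. -/
def DaysF : Finset (Fin 6) := {0, 1, 2, 3, 4}

/-- `⟨T ≤ d⟩`. -/
def TLe (d : Fin 6) : Form := chi (Finset.univ.filter (· ≤ d))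
/-- `⟨T ≥ d⟩`. -/
def TGe (d : Fin 6) : Form := chi (Finset.univ.filter (d ≤ ·))
/-- `⟨T = d⟩`. -/
def TEq (d : Fin 6) : Form := Form.var d

/-- Equivalence of axiom systems: mutual provability. -/
def EquivAx (A₁ A₂ : Set Form) : Prop :=
  (∀ φ ∈ A₂, Proves A₁ φ) ∧ (∀ φ ∈ A₁, Proves A₂ φ)

/-- Iverson bracket: `⊤` if `P` holds, else `⊥`. -/
noncomputable def iver (P : Prop) : Form := if P then Form.top else Form.bot

/-- The maximum of `K` (with default `Mo` for `K = ∅`). -/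
def maxD (K : Finset (Fin 6)) : Fin 6 := (K.max).getD 0

/-- `K ∖ {max K}` (with `∅ ∖ {max ∅} = ∅`). -/
def erasemax (K : Finset (Fin 6)) : Finset (Fin 6) := K.erase (maxD K)

/-- `σ^A := ⋀_{K ⊆ R} ([K_A ⊆ K] → χ_{K∖{max K}})`. -/
noncomputable def sigmaA (A : Set Form) : Form :=
  bigAnd (((Finset.univ : Finset (Finset (Fin 6))).toList).map
    (fun K => (iver (KA A ⊆ K)).imp (chi (erasemax K))))

/-- The set of `A`-p-surprising days. -/
def Dsurpr (A : Set Form) : Set (Fin 6) :=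
  {d | d ∈ DaysF ∧ d ∈ KA A ∧ ¬ Proves A (TLe d)}

/-- `A` is inconsistent iff it proves every formula. -/
def Inconsistent (A : Set Form) : Prop := ∀ φ, Proves A φ

/-- `τ^A := ⋁_{d ∈ D} ⋀_{K ⊆ R} ([A ⊢ χ_K] → [d ∈ K∖{max K}])`. -/
noncomputable def tauA (A : Set Form) : Form :=
  bigOr ((DaysF.sort (· ≤ ·)).map (fun d =>
    bigAnd (((Finset.univ : Finset (Finset (Fin 6))).toList).map
      (fun K => (iver (Proves A (chi K))).imp (iver (d ∈ erasemax K))))))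

/-- The axiom system `𝒜_L = {(Ax_{=1}), χ_L}`. -/
def AL (L : Finset (Fin 6)) : Set Form := {Ax1, chi L}


lemma eval_bigOr (r : Fin 6) (l : List Form) :
    Form.eval r (bigOr l) = l.any (Form.eval r) := by
  induction l with
  | nil => rfl
  | cons a t ih =>
    simp only [bigOr] at ih ⊢
    simp [Form.or, Form.neg, Form.eval, ih]

lemma sat_chi (r : Fin 6) (B : Finset (Fin 6)) : Sat r (chi B) ↔ r ∈ B := by
  simp [Sat, chi, eval_bigOr, List.any_map, List.any_eq_true, Form.eval, Finset.mem_sort]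

/-- If `A` proves `⟨T ∈ D⟩` and, for each `d ∈ {Tu,We,Th,Fr}`, the formula
`[A ⊢ ⟨T ≤ d⟩] → ⟨T ≠ d⟩`, then no day is `A`-p-surprising. -/
theorem stmt_7 (A : Set Form) (hA : Ax1 ∈ A)
    (h1 : Proves A (chi DaysF))
    (h2 : ∀ d ∈ ({1, 2, 3, 4} : Finset (Fin 6)),
      Proves A ((iver (Proves A (TLe d))).imp (Form.var d).neg)) :
    Dsurpr A = ∅ := by
  ext d
  simp only [Dsurpr, Set.mem_setOf_eq, Set.mem_empty_iff_false, iff_false]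
  rintro ⟨hdD, hdK, hnp⟩
  set S : Finset (Fin 6) := Finset.univ.filter (fun r => ∀ ψ ∈ A, Sat r ψ) with hS
  have hKS : KSet A S := fun r hr => (sat_chi r S).mpr (by simp [hS]; exact hr)
  have hdS : d ∈ S := by
    have h' : ∀ K, KSet A K → d ∈ K := by simpa [KA] using hdK
    exact h' S hKS
  have hne : S.Nonempty := ⟨d, hdS⟩
  set m := S.max' hne with hm
  have hmS : m ∈ S := S.max'_mem hne
  have hmA : ∀ ψ ∈ A, Sat m ψ := by simpa [hS] using hmS
  have hmD : m ∈ DaysF := (sat_chi m DaysF).mp (h1 m hmA)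
  have hnp' : ∃ r : Fin 6, (∀ ψ ∈ A, Sat r ψ) ∧ ¬ Sat r (TLe d) := by
    by_contra hc
    push_neg at hc
    exact hnp fun r hr => hc r hr
  obtain ⟨r, hrA, hrn⟩ := hnp'
  have hrS : r ∈ S := by simp [hS]; exact hrA
  have hrd : ¬ (r ≤ d) := fun h => hrn ((sat_chi r _).mpr (by simp [h]))
  have hdm : d < m := lt_of_lt_of_le (not_le.mp hrd) (S.le_max' r hrS)
  have hPle : Proves A (TLe m) := fun s hs =>
    (sat_chi s _).mpr (by simp; exact S.le_max' s (by simp [hS]; exact hs))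
  have hm14 : m ∈ ({1, 2, 3, 4} : Finset (Fin 6)) := by
    have hm0 : m ≠ 0 := by
      intro h; rw [h] at hdm; exact absurd hdm (by simp [Fin.lt_def])
    simp [DaysF] at hmD
    rcases hmD with h | h | h | h | h <;> simp [h] at hm0 ⊢
  have hfin := h2 m hm14 m hmA
  simp [Sat, Form.eval, iver, hPle, Form.neg, Form.top] at hfin
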